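/- Let G₁, G₂ be groups with Hom(G₁, G₂) = 0 (every homomorphism G₁ → G₂ is trivial). Then every automorphism φ of G₁ × G₂ has invertible diagonal components: the maps φ₁₁ : G₁ → G₁ and φ₂₂ : G₂ → G₂ obtained from the inclusions and projections are automorphisms. -/

import Mathlib

/-! Since every homomorphism `G₁ → G₂` is trivial, both `φ` and `φ⁻¹` map the factor `G₁ × 1`
into itself, so `φ` restricts to an automorphism of `G₁ × 1 ≅ G₁`, which is `φ₁₁`, and induces an
automorphism of the quotient `(G₁ × G₂) / (G₁ × 1) ≅ G₂`, which is `φ₂₂`. -/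

namespace MulEquiv

variable {G₁ G₂ H₁ H₂ : Type*} [Group G₁] [Group G₂] [Group H₁] [Group H₂]

theorem bijective_fst_apply_mk_one (e : G₁ × G₂ ≃* H₁ × H₂)
    (he : ∀ g, (e (g, 1)).2 = 1) (he_symm : ∀ h, (e.symm (h, 1)).2 = 1) :
    Function.Bijective fun g : G₁ => (e (g, 1)).1 := by
  refine Function.bijective_iff_has_inverse.mpr ⟨fun h => (e.symm (h, 1)).1, ?_, ?_⟩
  · intro g
    have hmk : ((e (g, 1)).1, (1 : H₂)) = e (g, 1) := Prod.ext rfl (he g).symm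
    simp only [hmk, symm_apply_apply]
  · intro h
    have hmk : ((e.symm (h, 1)).1, (1 : G₂)) = e.symm (h, 1) := Prod.ext rfl (he_symm h).symm
    simp only [hmk, apply_symm_apply]

theorem bijective_snd_apply_one_mk (e : G₁ × G₂ ≃* H₁ × H₂)
    (he : ∀ g, (e (g, 1)).2 = 1) (he_symm : ∀ h, (e.symm (h, 1)).2 = 1) :
    Function.Bijective fun k : G₂ => (e (1, k)).2 := by
  constructor
  · show Function.Injective
      ((MonoidHom.snd H₁ H₂).comp (e.toMonoidHom.comp (MonoidHom.inr G₁ G₂)))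
    refine (injective_iff_map_eq_one _).mpr fun k hk => ?_
    have hmk : ((e (1, k)).1, (1 : H₂)) = e (1, k) := Prod.ext rfl hk.symm
    calc k = (e.symm (e (1, k))).2 := by rw [symm_apply_apply]
      _ = (e.symm ((e (1, k)).1, 1)).2 := by rw [hmk]
      _ = 1 := he_symm _
  · intro l
    refine ⟨(e.symm (1, l)).2, ?_⟩
    calc (e (1, (e.symm (1, l)).2)).2
        = (e ((e.symm (1, l)).1, 1) * e (1, (e.symm (1, l)).2)).2 := by
          rw [Prod.snd_mul, he, one_mul]
      _ = l := by rw [← map_mul, Prod.mk_mul_mk, mul_one, one_mul, apply_symm_apply]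

end MulEquiv

/-- If every homomorphism `G₁ → G₂` is trivial, then every automorphism of
`G₁ × G₂` has invertible diagonal components. -/
theorem automorphism_diag_bijective_of_hom_trivial {G₁ G₂ : Type*} [Group G₁] [Group G₂]
    (htriv : ∀ ψ : G₁ →* G₂, ∀ g : G₁, ψ g = 1)
    (φ : G₁ × G₂ →* G₁ × G₂) (hφ : Function.Bijective φ) :
    Function.Bijective (fun g : G₁ => (φ (g, 1)).1) ∧
      Function.Bijective (fun h : G₂ => (φ (1, h)).2) := by
  let e := MulEquiv.ofBijective φ hφ
  have he : ∀ g, (e (g, 1)).2 = 1 :=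
    htriv ((MonoidHom.snd G₁ G₂).comp (φ.comp (MonoidHom.inl G₁ G₂)))
  have he_symm : ∀ g, (e.symm (g, 1)).2 = 1 :=
    htriv ((MonoidHom.snd G₁ G₂).comp (e.symm.toMonoidHom.comp (MonoidHom.inl G₁ G₂)))
  exact ⟨e.bijective_fst_apply_mk_one he he_symm, e.bijective_snd_apply_one_mk he he_symm⟩
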